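/- There is a surjective ℚ-algebra homomorphism φ from A₀ onto the monoid algebra ℚ[M₀] with φ(i) = i and φ(j) = j, and the kernel of φ is the two-sided ideal of A₀ generated by the elements (ij)^m − i^m j^m for m ≥ 1. -/

import Mathlib

open FreeAlgebra

noncomputable section

/-- Defining relations for the specialisation at `q = 0` of the generic composition
algebra of the Kronecker quiver, on generators `i = ι ℚ 0` and `j = ι ℚ 1`:
(1) `i^m j^(m+1) i^(m+1) j^(m+2) = i^(2m+1) j^(2m+3)` for all `m ≥ 0`;
(2) `i^(n+2) j^(n+1) i^(n+1) j^n = i^(2n+3) j^(2n+1)` for all `n ≥ 0`;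
(3) `(i^m j^m)(i^n j^n) = (i^n j^n)(i^m j^m)` for all `m, n ≥ 1`. -/
inductive KroneckerRel0 : FreeAlgebra ℚ (Fin 2) → FreeAlgebra ℚ (Fin 2) → Prop
  | preproj (m : ℕ) :
      KroneckerRel0
        (ι ℚ 0 ^ m * ι ℚ 1 ^ (m + 1) * (ι ℚ 0 ^ (m + 1) * ι ℚ 1 ^ (m + 2)))
        (ι ℚ 0 ^ (2 * m + 1) * ι ℚ 1 ^ (2 * m + 3))
  | preinj (n : ℕ) :
      KroneckerRel0
        (ι ℚ 0 ^ (n + 2) * ι ℚ 1 ^ (n + 1) * (ι ℚ 0 ^ (n + 1) * ι ℚ 1 ^ n))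
        (ι ℚ 0 ^ (2 * n + 3) * ι ℚ 1 ^ (2 * n + 1))
  | deltaComm (m n : ℕ) (hm : 1 ≤ m) (hn : 1 ≤ n) :
      KroneckerRel0
        (ι ℚ 0 ^ m * ι ℚ 1 ^ m * (ι ℚ 0 ^ n * ι ℚ 1 ^ n))
        (ι ℚ 0 ^ n * ι ℚ 1 ^ n * (ι ℚ 0 ^ m * ι ℚ 1 ^ m))

/-- `A₀`, the composition algebra of the Kronecker quiver specialised at `q = 0`,
presented by generators `i, j` and the relations above. -/
abbrev A0 : Type := RingQuot KroneckerRel0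

/-- The generator `i` of `A₀`. -/
def iA : A0 := RingQuot.mkAlgHom ℚ KroneckerRel0 (ι ℚ 0)

/-- The generator `j` of `A₀`. -/
def jA : A0 := RingQuot.mkAlgHom ℚ KroneckerRel0 (ι ℚ 1)

/-- The commutator `ij - ji` in `A₀`. -/
def cA : A0 := iA * jA - jA * iA

/-- `P(m) = (ij - ji)^m j` in `A₀`. -/
def PA (m : ℕ) : A0 := cA ^ m * jA

/-- `I(n) = i (ij - ji)^n` in `A₀`. -/
def IA (n : ℕ) : A0 := iA * cA ^ n

/-- `R(1) = ij - ji` and `R(s+1) = i (ij - ji)^s j` for `s ≥ 1` in `A₀`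
(the value at `0` is junk). -/
def RA : ℕ → A0
  | 0 => 0
  | 1 => cA
  | (s + 2) => iA * cA ^ (s + 1) * jA

/-- `δ_m = i^m j^m` in `A₀`. -/
def deltaA (m : ℕ) : A0 := iA ^ m * jA ^ m

noncomputable section

/-- The generator `i` of the free monoid on two letters. -/
def iF : FreeMonoid (Fin 2) := FreeMonoid.of 0

/-- The generator `j` of the free monoid on two letters. -/
def jF : FreeMonoid (Fin 2) := FreeMonoid.of 1

/-- Defining relations of Reineke's composition monoid of the Kronecker quiver:
(1) `i^m j^(m+1) i^(m+1) j^(m+2) = i^(2m+1) j^(2m+3)` for all `m ≥ 0`;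
(2) `i^(n+2) j^(n+1) i^(n+1) j^n = i^(2n+3) j^(2n+1)` for all `n ≥ 0`;
(3) `(ij)^m = i^m j^m` for all `m ≥ 1`. -/
inductive KroneckerMonoidRel : FreeMonoid (Fin 2) → FreeMonoid (Fin 2) → Prop
  | preproj (m : ℕ) :
      KroneckerMonoidRel
        (iF ^ m * jF ^ (m + 1) * (iF ^ (m + 1) * jF ^ (m + 2)))
        (iF ^ (2 * m + 1) * jF ^ (2 * m + 3))
  | preinj (n : ℕ) :
      KroneckerMonoidRel
        (iF ^ (n + 2) * jF ^ (n + 1) * (iF ^ (n + 1) * jF ^ n))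
        (iF ^ (2 * n + 3) * jF ^ (2 * n + 1))
  | delta (m : ℕ) (hm : 1 ≤ m) :
      KroneckerMonoidRel ((iF * jF) ^ m) (iF ^ m * jF ^ m)

/-- `M₀`, Reineke's composition monoid of the Kronecker quiver, presented by
generators `i, j` and the relations above. -/
abbrev M0 : Type := (conGen KroneckerMonoidRel).Quotient

/-- The generator `i` of `M₀`. -/
def iM : M0 := (iF : M0)

/-- The generator `j` of `M₀`. -/
def jM : M0 := (jF : M0)

/-! The map `φ` is induced by `i ↦ i`, `j ↦ j`: relation (3) of `A₀` holds in `ℚ[M₀]` because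
there `i^m j^m = (ij)^m`, and powers of `ij` commute. Conversely, modulo the ideal `I` generated by
the `(ij)^m - i^m j^m`, the generators of `A₀` satisfy all defining relations of `M₀`, giving
`χ : ℚ[M₀] → A₀ / I` with `χ ∘ φ` the quotient map; hence `ker φ ⊆ I`, while `I ⊆ ker φ` is
relation (3) of `M₀`. Surjectivity holds because `M₀` is generated by `i` and `j`. -/

theorem TwoSidedIdeal.ker_eq_of_le_of_comp_eq_mk' {R S F : Type*} [Ring R] [Semiring S]
    [FunLike F R S] [RingHomClass F R S] {f : F} {I : TwoSidedIdeal R}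
    (hI : I ≤ TwoSidedIdeal.ker f) (g : S →+* I.ringCon.Quotient)
    (hg : ∀ x, g (f x) = I.ringCon.mk' x) :
    TwoSidedIdeal.ker f = I := by
  refine le_antisymm (fun x hx => ?_) hI
  rw [← TwoSidedIdeal.ker_ringCon_mk' I, TwoSidedIdeal.mem_ker, ← hg,
    (TwoSidedIdeal.mem_ker f).1 hx, map_zero]

theorem Con.closure_range_of_eq_top {α : Type*} (c : Con (FreeMonoid α)) :
    Submonoid.closure (Set.range fun a => ((FreeMonoid.of a : FreeMonoid α) : c.Quotient)) = ⊤ := by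
  have : FreeMonoid.lift (fun a => ((FreeMonoid.of a : FreeMonoid α) : c.Quotient)) = c.mk' :=
    FreeMonoid.hom_eq fun _ => rfl
  rw [← FreeMonoid.mrange_lift, this, MonoidHom.mrange_eq_top]
  exact c.mk'_surjective

theorem MonoidAlgebra.algHom_surjective_of_closure_eq_top {R A M : Type*} [CommSemiring R]
    [Semiring A] [Algebra R A] [Monoid M] {S : Set M} (hS : Submonoid.closure S = ⊤)
    (f : A →ₐ[R] MonoidAlgebra R M) (hf : ∀ s ∈ S, MonoidAlgebra.of R M s ∈ f.range) :
    Function.Surjective f := by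
  intro x
  obtain ⟨p, rfl⟩ := MonoidAlgebra.freeAlgebra_lift_of_surjective_of_closure hS x
  have : (FreeAlgebra.lift R fun s : S => MonoidAlgebra.of R M s).range ≤ f.range := by
    rw [← Algebra.adjoin_range_eq_range_freeAlgebra_lift]
    exact Algebra.adjoin_le (Set.range_subset_iff.2 fun s => hf s s.2)
  exact this ⟨p, rfl⟩

theorem commute_pow_mul_pow_of_mul_pow_eq {N : Type*} [Monoid N] {a b : N} {m n : ℕ}
    (hm : (a * b) ^ m = a ^ m * b ^ m) (hn : (a * b) ^ n = a ^ n * b ^ n) :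
    Commute (a ^ m * b ^ m) (a ^ n * b ^ n) := by
  rw [← hm, ← hn]
  exact (Commute.refl (a * b)).pow_pow m n

/-- Relations (1) and (2), shared by `A₀` and `M₀`. -/
structure IsKroneckerPair {N : Type*} [Monoid N] (a b : N) : Prop where
  preproj (m : ℕ) :
    a ^ m * b ^ (m + 1) * (a ^ (m + 1) * b ^ (m + 2)) = a ^ (2 * m + 1) * b ^ (2 * m + 3)
  preinj (n : ℕ) :
    a ^ (n + 2) * b ^ (n + 1) * (a ^ (n + 1) * b ^ n) = a ^ (2 * n + 3) * b ^ (2 * n + 1)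

theorem IsKroneckerPair.map {N N' F : Type*} [Monoid N] [Monoid N'] [FunLike F N N']
    [MonoidHomClass F N N'] {a b : N} (h : IsKroneckerPair a b) (f : F) :
    IsKroneckerPair (f a) (f b) where
  preproj m := by simpa only [map_mul, map_pow] using congrArg f (h.preproj m)
  preinj n := by simpa only [map_mul, map_pow] using congrArg f (h.preinj n)

namespace A0

theorem isKroneckerPair : IsKroneckerPair iA jA where
  preproj m := by
    simp only [iA, jA, ← map_pow, ← map_mul]
    exact RingQuot.mkAlgHom_rel ℚ (KroneckerRel0.preproj m)
  preinj n := by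
    simp only [iA, jA, ← map_pow, ← map_mul]
    exact RingQuot.mkAlgHom_rel ℚ (KroneckerRel0.preinj n)

variable {B : Type*} [Semiring B] [Algebra ℚ B]

def lift (a b : B) (hab : IsKroneckerPair a b)
    (hδ : ∀ m n, 1 ≤ m → 1 ≤ n → Commute (a ^ m * b ^ m) (a ^ n * b ^ n)) : A0 →ₐ[ℚ] B :=
  RingQuot.liftAlgHom ℚ ⟨FreeAlgebra.lift ℚ ![a, b], fun x y h => by
    induction h with
    | preproj m => simpa [FreeAlgebra.lift_ι_apply] using hab.preproj m
    | preinj n => simpa [FreeAlgebra.lift_ι_apply] using hab.preinj n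
    | deltaComm m n hm hn => simpa [FreeAlgebra.lift_ι_apply] using (hδ m n hm hn).eq⟩

section lift

variable (a b : B) (hab : IsKroneckerPair a b)
  (hδ : ∀ m n, 1 ≤ m → 1 ≤ n → Commute (a ^ m * b ^ m) (a ^ n * b ^ n))

@[simp]
theorem lift_iA : lift a b hab hδ iA = a := by
  simp [lift, iA, RingQuot.liftAlgHom_mkAlgHom_apply]

@[simp]
theorem lift_jA : lift a b hab hδ jA = b := by
  simp [lift, jA, RingQuot.liftAlgHom_mkAlgHom_apply]

end lift

theorem algHom_ext {f g : A0 →ₐ[ℚ] B} (hi : f iA = g iA) (hj : f jA = g jA) : f = g := by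
  refine RingQuot.ringQuot_ext' ℚ f g (FreeAlgebra.hom_ext (funext fun k => ?_))
  fin_cases k
  exacts [hi, hj]

end A0

namespace M0

theorem mk'_eq_of_rel {x y : FreeMonoid (Fin 2)} (h : KroneckerMonoidRel x y) :
    (conGen KroneckerMonoidRel).mk' x = (conGen KroneckerMonoidRel).mk' y :=
  (Con.eq _).2 (ConGen.Rel.of _ _ h)

theorem mk'_iF : (conGen KroneckerMonoidRel).mk' iF = iM := rfl

theorem mk'_jF : (conGen KroneckerMonoidRel).mk' jF = jM := rfl

theorem isKroneckerPair : IsKroneckerPair iM jM where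
  preproj m := by simpa only [map_mul, map_pow, mk'_iF, mk'_jF] using mk'_eq_of_rel (.preproj m)
  preinj n := by simpa only [map_mul, map_pow, mk'_iF, mk'_jF] using mk'_eq_of_rel (.preinj n)

theorem iM_mul_jM_pow {m : ℕ} (hm : 1 ≤ m) : (iM * jM) ^ m = iM ^ m * jM ^ m := by
  simpa only [map_mul, map_pow, mk'_iF, mk'_jF] using mk'_eq_of_rel (.delta m hm)

theorem closure_eq_top : Submonoid.closure {iM, jM} = ⊤ := by
  convert Con.closure_range_of_eq_top (conGen KroneckerMonoidRel)
  ext x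
  simp only [Set.mem_insert_iff, Set.mem_singleton_iff, Set.mem_range, Fin.exists_fin_two]
  tauto

variable {N : Type*} [Monoid N]

def lift (a b : N) (hab : IsKroneckerPair a b) (hδ : ∀ m, 1 ≤ m → (a * b) ^ m = a ^ m * b ^ m) :
    M0 →* N :=
  Con.lift _ (FreeMonoid.lift ![a, b]) <| Con.conGen_le.2 fun x y h => by
    induction h with
    | preproj m => simpa [iF, jF] using hab.preproj m
    | preinj n => simpa [iF, jF] using hab.preinj n
    | delta m hm => simpa [iF, jF] using hδ m hm

section lift

variable (a b : N) (hab : IsKroneckerPair a b) (hδ : ∀ m, 1 ≤ m → (a * b) ^ m = a ^ m * b ^ m)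

@[simp]
theorem lift_iM : lift a b hab hδ iM = a := rfl

@[simp]
theorem lift_jM : lift a b hab hδ jM = b := by
  simp [lift, jM, jF]

end lift

end M0

namespace A0

def deltaIdeal : TwoSidedIdeal A0 :=
  TwoSidedIdeal.span {y : A0 | ∃ m : ℕ, 1 ≤ m ∧ y = (iA * jA) ^ m - iA ^ m * jA ^ m}

theorem mk'_iA_mul_jA_pow {m : ℕ} (hm : 1 ≤ m) :
    (deltaIdeal.ringCon.mk' (iA * jA)) ^ m =
      deltaIdeal.ringCon.mk' iA ^ m * deltaIdeal.ringCon.mk' jA ^ m := by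
  rw [← map_pow, ← map_pow, ← map_pow, ← map_mul, ← sub_eq_zero, ← map_sub,
    ← TwoSidedIdeal.mem_ker, TwoSidedIdeal.ker_ringCon_mk']
  exact TwoSidedIdeal.subset_span ⟨m, hm, rfl⟩

def toMonoidAlgebra : A0 →ₐ[ℚ] MonoidAlgebra ℚ M0 :=
  lift (MonoidAlgebra.of ℚ M0 iM) (MonoidAlgebra.of ℚ M0 jM)
    (M0.isKroneckerPair.map (MonoidAlgebra.of ℚ M0)) fun m n hm hn => by
      simpa only [map_mul, map_pow] using
        (commute_pow_mul_pow_of_mul_pow_eq (M0.iM_mul_jM_pow hm) (M0.iM_mul_jM_pow hn)).map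
          (MonoidAlgebra.of ℚ M0)

@[simp]
theorem toMonoidAlgebra_iA : toMonoidAlgebra iA = MonoidAlgebra.of ℚ M0 iM := lift_iA ..

@[simp]
theorem toMonoidAlgebra_jA : toMonoidAlgebra jA = MonoidAlgebra.of ℚ M0 jM := lift_jA ..

theorem toMonoidAlgebra_surjective : Function.Surjective toMonoidAlgebra := by
  refine MonoidAlgebra.algHom_surjective_of_closure_eq_top M0.closure_eq_top _ ?_
  rintro _ (rfl | rfl)
  exacts [⟨iA, toMonoidAlgebra_iA⟩, ⟨jA, toMonoidAlgebra_jA⟩]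

theorem deltaIdeal_le_ker_toMonoidAlgebra : deltaIdeal ≤ TwoSidedIdeal.ker toMonoidAlgebra := by
  rw [deltaIdeal, TwoSidedIdeal.span_le]
  rintro _ ⟨m, hm, rfl⟩
  rw [SetLike.mem_coe, TwoSidedIdeal.mem_ker, map_sub, sub_eq_zero]
  simpa only [map_mul, map_pow, toMonoidAlgebra_iA, toMonoidAlgebra_jA] using
    congrArg (MonoidAlgebra.of ℚ M0) (M0.iM_mul_jM_pow hm)

def monoidAlgebraToQuotient : MonoidAlgebra ℚ M0 →ₐ[ℚ] deltaIdeal.ringCon.Quotient :=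
  MonoidAlgebra.lift ℚ _ M0 <|
    M0.lift (deltaIdeal.ringCon.mk' iA) (deltaIdeal.ringCon.mk' jA)
      (isKroneckerPair.map deltaIdeal.ringCon.mk') fun _ hm => by
        rw [← map_mul, mk'_iA_mul_jA_pow hm]

theorem monoidAlgebraToQuotient_toMonoidAlgebra (x : A0) :
    monoidAlgebraToQuotient (toMonoidAlgebra x) = deltaIdeal.ringCon.mk' x :=
  congrArg (· x) <| show monoidAlgebraToQuotient.comp toMonoidAlgebra = deltaIdeal.ringCon.mkₐ ℚ from
    algHom_ext (by simp [monoidAlgebraToQuotient]) (by simp [monoidAlgebraToQuotient])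

theorem ker_toMonoidAlgebra : TwoSidedIdeal.ker toMonoidAlgebra = deltaIdeal :=
  TwoSidedIdeal.ker_eq_of_le_of_comp_eq_mk' deltaIdeal_le_ker_toMonoidAlgebra
    monoidAlgebraToQuotient.toRingHom monoidAlgebraToQuotient_toMonoidAlgebra

end A0

theorem surjection_onto_composition_monoid_algebra :
    ∃ φ : A0 →ₐ[ℚ] MonoidAlgebra ℚ M0,
      Function.Surjective φ ∧
      φ iA = MonoidAlgebra.of ℚ M0 iM ∧
      φ jA = MonoidAlgebra.of ℚ M0 jM ∧
      ∀ x : A0, φ x = 0 ↔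
        x ∈ TwoSidedIdeal.span
              {y : A0 | ∃ m : ℕ, 1 ≤ m ∧ y = (iA * jA) ^ m - iA ^ m * jA ^ m} :=
  ⟨A0.toMonoidAlgebra, A0.toMonoidAlgebra_surjective, A0.toMonoidAlgebra_iA,
    A0.toMonoidAlgebra_jA, fun x => by rw [← TwoSidedIdeal.mem_ker, A0.ker_toMonoidAlgebra]; rfl⟩
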